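/- Let G be the one-sum of graphs G_1 and G_2 with V(G_1) ∩ V(G_2) = {c}. Then for any a ∈ V(G_1)\{c} and b ∈ V(G_2)\{c}, S(G,a,b) ≅ S(G_1,a,c) □ S(G_2,c,b). -/

import Mathlib

open SimpleGraph

/-- The type of `a,b`-geodesics in `G`: paths from `a` to `b` of length `d_G(a,b)`. -/
def Geodesic {V : Type*} (G : SimpleGraph V) (a b : V) : Type _ :=
  {p : G.Walk a b // p.IsPath ∧ p.length = G.dist a b}

/-- Two geodesics differ at exactly the index `i` (comparing vertex sequences). -/
def DiffAt {V : Type*} {G : SimpleGraph V} {a b : V} (U W : Geodesic G a b) (i : ℕ) : Prop :=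
  U.1.support.getD i a ≠ W.1.support.getD i a ∧
    ∀ j, j ≠ i → U.1.support.getD j a = W.1.support.getD j a

/-- The shortest path graph `S(G,a,b)`: vertices are `a,b`-geodesics, adjacent iff their
vertex sequences differ in exactly one position. -/
def SPG {V : Type*} (G : SimpleGraph V) (a b : V) : SimpleGraph (Geodesic G a b) where
  Adj U W := ∃ i, DiffAt U W i
  symm := by
    constructor
    rintro U W ⟨i, hne, hj⟩
    exact ⟨i, hne.symm, fun j hji => (hj j hji).symm⟩
  loopless := by
    constructor
    rintro U ⟨i, hne, -⟩
    exact hne rfl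

/-- A graph is a shortest path graph if it is isomorphic to `S(G,a,b)` for some `G`, `a ≠ b`. -/
def IsSPGraph {α : Type*} (H : SimpleGraph α) : Prop :=
  ∃ (V : Type) (G : SimpleGraph V) (a b : V), a ≠ b ∧ Nonempty (H ≃g SPG G a b)

/-
Every a–b walk in G₁ ⊔ G₂ crosses from S₁ to S₂ through the cut vertex c, and along a path the
segment before c uses only G₁-edges and the segment after c only G₂-edges. Hence the a,b-geodesics
of G₁ ⊔ G₂ are exactly the concatenations of an a,c-geodesic of G₁ with a c,b-geodesic of G₂, and
d(a,b) = d₁(a,c) + d₂(c,b). In two such concatenations c sits at the same position, so the set of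
positions where their vertex sequences differ is the disjoint union of the corresponding sets for
the two factors. It is a singleton iff one factor set is a singleton and the other is empty, which
is adjacency in S(G₁,a,c) □ S(G₂,c,b).
-/

def diffIndices {α : Type*} (l l' : List α) : Set ℕ := {i | l[i]? ≠ l'[i]?}

section diffIndices

variable {α : Type*}

theorem diffIndices_eq_empty_iff {l l' : List α} : diffIndices l l' = ∅ ↔ l = l' := by
  simp [diffIndices, Set.eq_empty_iff_forall_notMem, List.ext_getElem?_iff]

theorem lt_length_of_mem_diffIndices {l l' : List α} (h : l.length = l'.length) {i : ℕ}
    (hi : i ∈ diffIndices l l') : i < l.length := by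
  by_contra! hle
  exact hi (by rw [List.getElem?_eq_none hle, List.getElem?_eq_none (h ▸ hle)])

theorem diffIndices_append {l₁ l₁' l₂ l₂' : List α} (h : l₁.length = l₁'.length) :
    diffIndices (l₁ ++ l₂) (l₁' ++ l₂') =
      diffIndices l₁ l₁' ∪ (· + l₁.length) '' diffIndices l₂ l₂' := by
  ext i
  rcases lt_or_ge i l₁.length with hi | hi
  · simp only [diffIndices, ne_eq, Set.mem_ofPred_eq, List.getElem?_append_left hi,
      List.getElem?_append_left (h ▸ hi), Set.mem_union, Set.mem_image, iff_self_or,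
      forall_exists_index, and_imp]
    omega
  · obtain ⟨k, rfl⟩ := Nat.exists_eq_add_of_le' hi
    simp [diffIndices, List.getElem?_append_right, h]

theorem encard_diffIndices_append {l₁ l₁' l₂ l₂' : List α} (h : l₁.length = l₁'.length) :
    (diffIndices (l₁ ++ l₂) (l₁' ++ l₂')).encard =
      (diffIndices l₁ l₁').encard + (diffIndices l₂ l₂').encard := by
  rw [diffIndices_append h, Set.encard_union_eq, (add_left_injective _).encard_image]
  rw [Set.disjoint_left]
  rintro _ hi ⟨k, -, rfl⟩
  have := lt_length_of_mem_diffIndices h hi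
  dsimp only at this
  omega

theorem encard_diffIndices_cons (x : α) (l l' : List α) :
    (diffIndices (x :: l) (x :: l')).encard = (diffIndices l l').encard := by
  change (diffIndices ([x] ++ l) ([x] ++ l')).encard = _
  rw [encard_diffIndices_append rfl, diffIndices_eq_empty_iff.mpr rfl, Set.encard_empty, zero_add]

end diffIndices

theorem List.getD_eq_getD_iff_of_length_eq {α : Type*} {l l' : List α}
    (h : l.length = l'.length) (i : ℕ) (d : α) : l.getD i d = l'.getD i d ↔ l[i]? = l'[i]? := by
  rcases lt_or_ge i l.length with hi | hi
  · simp [List.getD_eq_getElem?_getD, List.getElem?_eq_getElem hi,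
      List.getElem?_eq_getElem (h ▸ hi)]
  · simp [List.getD_eq_getElem?_getD, List.getElem?_eq_none hi, List.getElem?_eq_none (h ▸ hi)]

theorem ENat.add_eq_one_iff {m n : ℕ∞} : m + n = 1 ↔ m = 1 ∧ n = 0 ∨ m = 0 ∧ n = 1 := by
  induction m using ENat.recTopCoe <;> induction n using ENat.recTopCoe <;> simp
  norm_cast
  omega

section ShortestPathGraph

variable {V : Type*}

theorem Geodesic.length_support {G : SimpleGraph V} {a b : V} (U : Geodesic G a b) :
    U.1.support.length = G.dist a b + 1 := by
  rw [Walk.length_support, U.2.2]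

theorem Geodesic.eq_iff_encard_diffIndices_eq_zero {G : SimpleGraph V} {a b : V}
    {U W : Geodesic G a b} : U = W ↔ (diffIndices U.1.support W.1.support).encard = 0 := by
  rw [Set.encard_eq_zero, diffIndices_eq_empty_iff]
  exact ⟨fun h => h ▸ rfl, fun h => Subtype.ext (Walk.ext_support h)⟩

theorem spg_adj_iff_encard_diffIndices_eq_one {G : SimpleGraph V} {a b : V}
    {U W : Geodesic G a b} :
    (SPG G a b).Adj U W ↔ (diffIndices U.1.support W.1.support).encard = 1 := by
  have hlen : U.1.support.length = W.1.support.length := by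
    rw [U.length_support, W.length_support]
  simp only [SPG, DiffAt, ne_eq, List.getD_eq_getD_iff_of_length_eq hlen, Set.encard_eq_one,
    Set.eq_singleton_iff_unique_mem, diffIndices, Set.mem_ofPred_eq, not_imp_comm]

theorem nonempty_spg_iso_boxProd_of_support_eq {G G₁ G₂ : SimpleGraph V} {a b c : V}
    (f : Geodesic G₁ a c × Geodesic G₂ c b → Geodesic G a b) (hf : f.Surjective)
    (hsupp : ∀ Q, (f Q).1.support = Q.1.1.support ++ Q.2.1.support.tail) :
    Nonempty (SPG G a b ≃g (SPG G₁ a c □ SPG G₂ c b)) := by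
  have hdiff : ∀ Q Q', (diffIndices (f Q).1.support (f Q').1.support).encard =
      (diffIndices Q.1.1.support Q'.1.1.support).encard +
        (diffIndices Q.2.1.support Q'.2.1.support).encard := by
    intro Q Q'
    rw [hsupp, hsupp, encard_diffIndices_append (by rw [Q.1.length_support, Q'.1.length_support]),
      ← encard_diffIndices_cons c Q.2.1.support.tail, Walk.cons_tail_support,
      Walk.cons_tail_support]
  have hinj : f.Injective := by
    intro Q Q' h
    rw [Geodesic.eq_iff_encard_diffIndices_eq_zero, hdiff, add_eq_zero] at h
    exact Prod.ext (Geodesic.eq_iff_encard_diffIndices_eq_zero.2 h.1)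
      (Geodesic.eq_iff_encard_diffIndices_eq_zero.2 h.2)
  refine ⟨RelIso.symm ⟨Equiv.ofBijective f ⟨hinj, hf⟩, ?_⟩⟩
  intro Q Q'
  change (SPG G a b).Adj (f Q) (f Q') ↔ _
  simp only [spg_adj_iff_encard_diffIndices_eq_one, hdiff, ENat.add_eq_one_iff, boxProd_adj,
    Geodesic.eq_iff_encard_diffIndices_eq_zero]
  tauto

end ShortestPathGraph

namespace SimpleGraph

variable {V : Type*}

namespace Walk

theorem mem_support_of_mem_of_notMem {G : SimpleGraph V} {S : Set V} {c : V}
    (hstep : ∀ x y, G.Adj x y → x ∈ S → x ≠ c → y ∈ S) :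
    ∀ {x y : V} (p : G.Walk x y), x ∈ S → y ∉ S → c ∈ p.support
  | _, _, nil, hx, hy => absurd hx hy
  | x, _, cons h p, hx, hy => by
    by_cases hxc : x = c
    · simp [hxc]
    · exact List.mem_cons_of_mem _
        (mem_support_of_mem_of_notMem hstep p (hstep _ _ h hx hxc) hy)

theorem edges_subset_of_isPath {G H : SimpleGraph V} {S : Set V} {c : V}
    (hstep : ∀ x y, G.Adj x y → x ∈ S → x ≠ c → H.Adj x y ∧ y ∈ S) :
    ∀ {x : V} (p : G.Walk x c), p.IsPath → x ∈ S → ∀ e ∈ p.edges, e ∈ H.edgeSet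
  | _, nil, _, _ => by simp
  | x, cons h p, hp, hx => by
    rw [cons_isPath_iff] at hp
    have hxc : x ≠ c := fun hxc => hp.2 (hxc ▸ p.end_mem_support)
    obtain ⟨hH, hy⟩ := hstep _ _ h hx hxc
    simp only [edges_cons, List.mem_cons, forall_eq_or_imp]
    exact ⟨hH, edges_subset_of_isPath hstep p hp.1 hy⟩

def appendSup {G₁ G₂ : SimpleGraph V} {a b c : V} (q₁ : G₁.Walk a c) (q₂ : G₂.Walk c b) :
    (G₁ ⊔ G₂).Walk a b :=
  (q₁.mapLe le_sup_left).append (q₂.mapLe le_sup_right)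

@[simp]
theorem length_appendSup {G₁ G₂ : SimpleGraph V} {a b c : V} (q₁ : G₁.Walk a c)
    (q₂ : G₂.Walk c b) : (q₁.appendSup q₂).length = q₁.length + q₂.length := by
  simp [appendSup]

theorem support_appendSup {G₁ G₂ : SimpleGraph V} {a b c : V} (q₁ : G₁.Walk a c)
    (q₂ : G₂.Walk c b) : (q₁.appendSup q₂).support = q₁.support ++ q₂.support.tail := by
  simp [appendSup, support_append]

end Walk

section OneSum

variable {G₁ G₂ : SimpleGraph V} {S₁ S₂ : Set V} {a b c : V}

theorem sup_adj_left_of_mem (hS : S₁ ∩ S₂ = {c}) (h₁ : ∀ u v, G₁.Adj u v → u ∈ S₁ ∧ v ∈ S₁)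
    (h₂ : ∀ u v, G₂.Adj u v → u ∈ S₂ ∧ v ∈ S₂) {x y : V} (hxy : (G₁ ⊔ G₂).Adj x y)
    (hx : x ∈ S₁) (hxc : x ≠ c) : G₁.Adj x y ∧ y ∈ S₁ := by
  rcases hxy with h | h
  · exact ⟨h, (h₁ _ _ h).2⟩
  · exact absurd (hS ▸ ⟨hx, (h₂ _ _ h).1⟩ : x ∈ ({c} : Set V)) hxc

theorem sup_adj_right_of_mem (hS : S₁ ∩ S₂ = {c}) (h₁ : ∀ u v, G₁.Adj u v → u ∈ S₁ ∧ v ∈ S₁)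
    (h₂ : ∀ u v, G₂.Adj u v → u ∈ S₂ ∧ v ∈ S₂) {x y : V} (hxy : (G₁ ⊔ G₂).Adj x y)
    (hx : x ∈ S₂) (hxc : x ≠ c) : G₂.Adj x y ∧ y ∈ S₂ :=
  sup_adj_left_of_mem (Set.inter_comm S₁ S₂ ▸ hS) h₂ h₁ (sup_comm G₁ G₂ ▸ hxy) hx hxc

theorem exists_eq_appendSup (hS : S₁ ∩ S₂ = {c}) (h₁ : ∀ u v, G₁.Adj u v → u ∈ S₁ ∧ v ∈ S₁)
    (h₂ : ∀ u v, G₂.Adj u v → u ∈ S₂ ∧ v ∈ S₂) (ha : a ∈ S₁) (hb : b ∈ S₂) (hbc : b ≠ c)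
    (p : (G₁ ⊔ G₂).Walk a b) (hp : p.IsPath) :
    ∃ (q₁ : G₁.Walk a c) (q₂ : G₂.Walk c b), p = q₁.appendSup q₂ := by
  classical
  have hbS₁ : b ∉ S₁ := fun hb₁ => hbc (hS ▸ ⟨hb₁, hb⟩ : b ∈ ({c} : Set V))
  have hc : c ∈ p.support := p.mem_support_of_mem_of_notMem
    (fun _ _ h hx hxc => (sup_adj_left_of_mem hS h₁ h₂ h hx hxc).2) ha hbS₁
  have he₁ := (p.takeUntil c hc).edges_subset_of_isPath
    (fun _ _ h hx hxc => sup_adj_left_of_mem hS h₁ h₂ h hx hxc) (hp.takeUntil hc) ha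
  have he₂ : ∀ e ∈ (p.dropUntil c hc).edges, e ∈ G₂.edgeSet := by
    simpa using (p.dropUntil c hc).reverse.edges_subset_of_isPath
      (fun _ _ h hx hxc => sup_adj_right_of_mem hS h₁ h₂ h hx hxc) (hp.dropUntil hc).reverse hb
  refine ⟨(p.takeUntil c hc).transfer G₁ he₁, (p.dropUntil c hc).transfer G₂ he₂,
    Walk.ext_support ?_⟩
  conv_lhs => rw [← p.take_spec hc]
  rw [Walk.support_appendSup, Walk.support_append, Walk.support_transfer, Walk.support_transfer]

theorem dist_sup_eq (hS : S₁ ∩ S₂ = {c}) (h₁ : ∀ u v, G₁.Adj u v → u ∈ S₁ ∧ v ∈ S₁)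
    (h₂ : ∀ u v, G₂.Adj u v → u ∈ S₂ ∧ v ∈ S₂) (ha : a ∈ S₁) (hb : b ∈ S₂) (hbc : b ≠ c)
    (hr₁ : G₁.Reachable a c) (hr₂ : G₂.Reachable c b) :
    (G₁ ⊔ G₂).dist a b = G₁.dist a c + G₂.dist c b := by
  obtain ⟨q₁, hq₁⟩ := hr₁.exists_walk_length_eq_dist
  obtain ⟨q₂, hq₂⟩ := hr₂.exists_walk_length_eq_dist
  obtain ⟨p, hp, hpl⟩ := Reachable.exists_path_of_dist (G := G₁ ⊔ G₂) ⟨q₁.appendSup q₂⟩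
  obtain ⟨p₁, p₂, rfl⟩ := exists_eq_appendSup hS h₁ h₂ ha hb hbc p hp
  have := dist_le (q₁.appendSup q₂)
  have := dist_le p₁
  have := dist_le p₂
  simp only [Walk.length_appendSup] at *
  omega

theorem exists_surjective_geodesic_appendSup (hS : S₁ ∩ S₂ = {c})
    (h₁ : ∀ u v, G₁.Adj u v → u ∈ S₁ ∧ v ∈ S₁) (h₂ : ∀ u v, G₂.Adj u v → u ∈ S₂ ∧ v ∈ S₂)
    (ha : a ∈ S₁) (hb : b ∈ S₂) (hbc : b ≠ c) :
    ∃ f : Geodesic G₁ a c × Geodesic G₂ c b → Geodesic (G₁ ⊔ G₂) a b,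
      f.Surjective ∧ ∀ Q, (f Q).1 = Q.1.1.appendSup Q.2.1 := by
  have hd (q₁ : G₁.Walk a c) (q₂ : G₂.Walk c b) :=
    dist_sup_eq hS h₁ h₂ ha hb hbc ⟨q₁⟩ ⟨q₂⟩
  have hlen (Q : Geodesic G₁ a c × Geodesic G₂ c b) :
      (Q.1.1.appendSup Q.2.1).length = (G₁ ⊔ G₂).dist a b := by
    rw [Walk.length_appendSup, Q.1.2.2, Q.2.2.2, hd Q.1.1 Q.2.1]
  refine ⟨fun Q => ⟨_, Walk.isPath_of_length_eq_dist _ (hlen Q), hlen Q⟩, ?_, fun _ => rfl⟩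
  rintro ⟨p, hp, hpl⟩
  obtain ⟨q₁, q₂, rfl⟩ := exists_eq_appendSup hS h₁ h₂ ha hb hbc p hp
  rw [Walk.length_appendSup, hd q₁ q₂] at hpl
  have := dist_le q₁
  have := dist_le q₂
  have hq₁ : q₁.length = G₁.dist a c := by omega
  have hq₂ : q₂.length = G₂.dist c b := by omega
  exact ⟨(⟨q₁, q₁.isPath_of_length_eq_dist hq₁, hq₁⟩, ⟨q₂, q₂.isPath_of_length_eq_dist hq₂, hq₂⟩),
    rfl⟩

end OneSum

end SimpleGraph

theorem stmt7_general {V : Type*} (G₁ G₂ : SimpleGraph V) (S₁ S₂ : Set V) (c a b : V)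
    (hS : S₁ ∩ S₂ = {c})
    (h₁ : ∀ u v, G₁.Adj u v → u ∈ S₁ ∧ v ∈ S₁)
    (h₂ : ∀ u v, G₂.Adj u v → u ∈ S₂ ∧ v ∈ S₂)
    (ha : a ∈ S₁) (hb : b ∈ S₂) (hbc : b ≠ c) :
    Nonempty (SPG (G₁ ⊔ G₂) a b ≃g (SPG G₁ a c □ SPG G₂ c b)) := by
  obtain ⟨f, hf, hfQ⟩ := exists_surjective_geodesic_appendSup hS h₁ h₂ ha hb hbc
  exact nonempty_spg_iso_boxProd_of_support_eq f hf fun Q => by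
    rw [hfQ, Walk.support_appendSup]

theorem stmt7 {V : Type*} (G₁ G₂ : SimpleGraph V) (S₁ S₂ : Set V) (c a b : V)
    (hS : S₁ ∩ S₂ = {c})
    (h₁ : ∀ u v, G₁.Adj u v → u ∈ S₁ ∧ v ∈ S₁)
    (h₂ : ∀ u v, G₂.Adj u v → u ∈ S₂ ∧ v ∈ S₂)
    (ha : a ∈ S₁) (hac : a ≠ c) (hb : b ∈ S₂) (hbc : b ≠ c) :
    Nonempty (SPG (G₁ ⊔ G₂) a b ≃g (SPG G₁ a c □ SPG G₂ c b)) :=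
  stmt7_general G₁ G₂ S₁ S₂ c a b hS h₁ h₂ ha hb hbc
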